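/- If D is a condensed integral domain and a is an atom of D, then a belongs to a unique maximal ideal of D. -/
import Mathlib


/-- An integral domain is condensed if for every pair of nonzero ideals `I, J`,
the product `I*J` equals the set of products `{i*j : i ∈ I, j ∈ J}`. -/
def IsCondensed (D : Type*) [CommRing D] : Prop :=
  ∀ I J : Ideal D, I ≠ ⊥ → J ≠ ⊥ → ∀ x ∈ I * J, ∃ i ∈ I, ∃ j ∈ J, x = i * j

theorem stmt1 (D : Type*) [CommRing D] [IsDomain D] (hD : IsCondensed D)
    (a : D) (ha : Irreducible a) :
    ∃! M : Ideal D, M.IsMaximal ∧ a ∈ M := by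
  obtain ⟨M, hM, haM⟩ :=
    Ideal.exists_le_maximal (Ideal.span {a}) (by
      simpa [Ideal.span_singleton_eq_top] using ha.not_isUnit)
  refine ⟨M, ⟨hM, haM (Ideal.mem_span_singleton_self a)⟩, ?_⟩
  rintro N ⟨hN, haN⟩
  by_contra hne
  have hsup : N ⊔ M = ⊤ := Ideal.IsMaximal.coprime_of_ne hN hM hne
  have ha0 : a ≠ 0 := ha.ne_zero
  have hNbot : N ≠ ⊥ := fun h => ha0 (by simpa [h] using haN)
  have hMbot : M ≠ ⊥ := fun h => ha0 (by simpa [h] using haM (Ideal.mem_span_singleton_self a))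
  have hmem : a ∈ N * M := by
    rw [Ideal.mul_eq_inf_of_coprime hsup]
    exact ⟨haN, haM (Ideal.mem_span_singleton_self a)⟩
  obtain ⟨i, hi, j, hj, hij⟩ := hD N M hNbot hMbot a hmem
  rcases ha.isUnit_or_isUnit hij with h | h
  · exact hN.ne_top (N.eq_top_of_isUnit_mem hi h)
  · exact hM.ne_top (M.eq_top_of_isUnit_mem hj h)
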